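/- Let m > 0, φ(θ) = -m cos θ, and define b_φ(e) = 2√2 ∫₀^{2π} cos θ · √((e + m cos θ)₊) dθ. Then b_φ(e) = 4√2 ∫₀^{π/2} cos θ (√((e + m cos θ)₊) - √((e - m cos θ)₊)) dθ, and b_φ(e) > 0 for all e > -m. -/

import Mathlib

/-!
The integrand is `F (cos θ)` with `F x = x √((e + m x)₊)`. Periodicity and evenness fold
`[0, 2π]` onto `[0, π]`, and `θ ↦ π - θ` folds `[π/2, π]` onto `[0, π/2]`, turning `F (cos θ)`
into `F (cos θ) + F (-cos θ)`. On `[0, π/2]` we have `cos θ ≥ 0`, so the folded integrand is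
nonnegative since `m > 0`; at `θ = 0` it equals `√((e + m)₊) - √((e - m)₊) > 0` when `e > -m`,
so the integral of this continuous function is positive.
-/

open Real Set MeasureTheory intervalIntegral

noncomputable def bphi (m e : ℝ) : ℝ :=
  2 * Real.sqrt 2 * ∫ θ in (0:ℝ)..(2 * π), Real.cos θ * Real.sqrt (max (e + m * Real.cos θ) 0)

theorem Function.Periodic.intervalIntegral_eq_two_mul_of_even {g : ℝ → ℝ} {T : ℝ}
    (hg : Function.Periodic g T) (heven : ∀ x, g (-x) = g x)
    (hint : IntervalIntegrable g volume 0 (T / 2)) :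
    ∫ x in (0:ℝ)..T, g x = 2 * ∫ x in (0:ℝ)..T / 2, g x := by
  have hint' : IntervalIntegrable g volume (-(T / 2)) 0 := by
    have h := (IntervalIntegrable.iff_comp_neg).mp hint
    simp only [heven, neg_zero] at h
    exact h.symm
  have hreflect : ∫ x in -(T / 2)..0, g x = ∫ x in (0:ℝ)..T / 2, g x := by
    simpa [heven] using (integral_comp_neg (a := 0) (b := T / 2) g).symm
  calc ∫ x in (0:ℝ)..T, g x = ∫ x in -(T / 2)..T / 2, g x := by
        have h := hg.intervalIntegral_add_eq (-(T / 2)) 0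
        rw [show -(T / 2) + T = T / 2 by ring, zero_add] at h
        exact h.symm
    _ = (∫ x in -(T / 2)..0, g x) + ∫ x in (0:ℝ)..T / 2, g x :=
        (integral_add_adjacent_intervals hint' hint).symm
    _ = 2 * ∫ x in (0:ℝ)..T / 2, g x := by rw [hreflect, two_mul]

theorem integral_zero_two_pi_comp_cos {F : ℝ → ℝ} (hF : Continuous F) :
    ∫ θ in (0:ℝ)..2 * π, F (cos θ) = 2 * ∫ θ in (0:ℝ)..π / 2, (F (cos θ) + F (-cos θ)) := by
  have hcont : Continuous fun θ => F (cos θ) := hF.comp continuous_cos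
  have hpi : ∫ θ in π / 2..π, F (cos θ) = ∫ θ in (0:ℝ)..π / 2, F (-cos θ) := by
    have h := integral_comp_sub_left (a := 0) (b := π / 2) (fun θ => F (cos θ)) π
    simp only [cos_pi_sub, sub_zero] at h
    rw [h]; ring_nf
  have hper : Function.Periodic (fun θ => F (cos θ)) (2 * π) := fun θ => by
    simp only [cos_add_two_pi]
  rw [hper.intervalIntegral_eq_two_mul_of_even (fun θ => by simp) (hcont.intervalIntegrable _ _),
    mul_div_cancel_left₀ π two_ne_zero,
    ← integral_add_adjacent_intervals (b := π / 2) (hcont.intervalIntegrable _ _)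
      (hcont.intervalIntegrable _ _),
    hpi, integral_add (hcont.intervalIntegrable _ _)
      ((show Continuous fun θ => F (-cos θ) by fun_prop).intervalIntegrable _ _)]

theorem sqrt_max_sub_le_sqrt_max_add {e m x : ℝ} (hm : 0 ≤ m) (hx : 0 ≤ x) :
    √(max (e - m * x) 0) ≤ √(max (e + m * x) 0) :=
  sqrt_le_sqrt (max_le_max (by nlinarith) le_rfl)

theorem sqrt_max_sub_lt_sqrt_max_add {e m x : ℝ} (hm : 0 < m) (hx : 0 < x) (he : 0 < e + m * x) :
    √(max (e - m * x) 0) < √(max (e + m * x) 0) := by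
  refine sqrt_lt_sqrt (le_max_right _ _) ?_
  rw [max_eq_left he.le]
  exact max_lt (by nlinarith) he

theorem integral_cos_mul_sqrt_diff_pos {m e : ℝ} (hm : 0 < m) (he : -m < e) :
    0 < ∫ θ in (0:ℝ)..π / 2,
      cos θ * (√(max (e + m * cos θ) 0) - √(max (e - m * cos θ) 0)) := by
  refine integral_pos (by positivity) (by fun_prop) (fun θ hθ => ?_) ⟨0, ?_, ?_⟩
  · have hcos : 0 ≤ cos θ := cos_nonneg_of_mem_Icc ⟨by linarith [hθ.1, pi_pos], hθ.2⟩
    exact mul_nonneg hcos (sub_nonneg.mpr (sqrt_max_sub_le_sqrt_max_add hm.le hcos))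
  · exact ⟨le_rfl, by positivity⟩
  · rw [cos_zero, one_mul]
    exact sub_pos.mpr (sqrt_max_sub_lt_sqrt_max_add hm one_pos (by linarith))

/-- b_φ(e) = 4√2 ∫₀^{π/2} cos θ (√((e + m cos θ)₊) - √((e - m cos θ)₊)) dθ,
and b_φ(e) > 0 for e > -m. -/
theorem bphi_symm_and_pos (m : ℝ) (hm : 0 < m) (e : ℝ) :
    bphi m e = 4 * Real.sqrt 2 * ∫ θ in (0:ℝ)..(π / 2),
        Real.cos θ * (Real.sqrt (max (e + m * Real.cos θ) 0)
          - Real.sqrt (max (e - m * Real.cos θ) 0)) ∧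
    (-m < e → 0 < bphi m e) := by
  have hsymm : bphi m e = 4 * √2 * ∫ θ in (0:ℝ)..π / 2,
      cos θ * (√(max (e + m * cos θ) 0) - √(max (e - m * cos θ) 0)) := by
    rw [bphi, integral_zero_two_pi_comp_cos (F := fun x => x * √(max (e + m * x) 0))
      (by fun_prop)]
    simp only [mul_neg, ← sub_eq_add_neg, neg_mul, mul_sub]
    ring
  refine ⟨hsymm, fun he => ?_⟩
  rw [hsymm]
  have := integral_cos_mul_sqrt_diff_pos hm he
  positivity
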